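/- arXiv:1801.01605 — 3 statements merged into one kernel-verified Lean document; each statement's English description precedes it below -/
import Mathlib

section
/- There exists an absolute constant C > 0 such that for all integers a ≥ 0, d ≥ 1, N ≥ 1 satisfying max(N·d, d^{4/3}) ≤ a ≤ N^{2/3}·d^{4/3} and a ≤ N^{4/3}·d^{4/3}/200, one has δ ≤ C · d / a^{1/4}; that is, there exist an integer n with 0 ≤ n ≤ N and an integer m with |a + n·d − m²| ≤ C · d / a^{1/4}. -/
set_option maxHeartbeats 4000000
set_option linter.unusedVariables false

private lemma int_ivt (f : ℤ → ℝ) (t : ℝ) : ∀ (n : ℕ) (a : ℤ), 1 ≤ n → t ≤ f a → f (a + n) ≤ t →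
    ∃ k, a ≤ k ∧ k < a + n ∧ t ≤ f k ∧ f (k + 1) ≤ t := by
  intro n
  induction n with
  | zero => intro a h _ _; exact absurd h (by norm_num)
  | succ n ih =>
    intro a _ ha hb
    by_cases h : f (a + 1) ≤ t
    · exact ⟨a, le_refl a, by omega, ha, h⟩
    · have hn1 : 1 ≤ n := by
        rcases Nat.eq_zero_or_pos n with h0 | h1
        · subst h0
          norm_num at hb
          exact absurd hb h
        · exact h1
      have hb' : f (a + 1 + n) ≤ t := by
        have he : a + 1 + (n:ℤ) = a + ((n+1 : ℕ) : ℤ) := by push_cast; ring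
        rw [he]; exact hb
      obtain ⟨k, h1, h2, h3, h4⟩ := ih (a+1) hn1 (le_of_lt (not_le.mp h)) hb'
      exact ⟨k, by omega, by omega, h3, h4⟩

private lemma poly_aux (x : ℝ) (hx : 14 ≤ x) : 432*(x-3)^2 ≤ 47*(x-1)*(47*x-48) := by
  nlinarith [sq_nonneg (x - 14), hx]

private lemma sq_aux (d u y : ℝ) (hu : 0 ≤ u) (h : u^3 ≤ 4*d*y) : 27*u^6 ≤ 432*d^2*y^2 := by
  have h0 : 0 ≤ u^3 := by positivity
  have h1 : 0 ≤ 4*d*y - u^3 := by linarith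
  have h2 : 0 ≤ 4*d*y + u^3 := by linarith
  nlinarith [mul_nonneg h1 h2]

private lemma step_chain (d u P S c e : ℝ) (hd : 0 < d) (hu : 0 < u)
    (hP : 4*u^4 ≤ P) (hS : S*u^2 ≤ c*d) (hce : c ≤ e) (he : 47*e*d ≤ 800*u^3) :
    47*d*S*u^3 ≤ 200*d*P := by
  have h1 : S*u^2*u ≤ c*d*u := mul_le_mul_of_nonneg_right hS hu.le
  have h2 : c*d ≤ e*d := mul_le_mul_of_nonneg_right hce hd.le
  have h3 : c*d*u ≤ e*d*u := mul_le_mul_of_nonneg_right h2 hu.le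
  have h4 : 47*d*(S*u^2*u) ≤ 47*d*(e*d*u) :=
    mul_le_mul_of_nonneg_left (h1.trans h3) (by positivity)
  have h5 : (47*e*d)*(d*u) ≤ (800*u^3)*(d*u) :=
    mul_le_mul_of_nonneg_right he (by positivity)
  have h6 : 200*d*(4*u^4) ≤ 200*d*P := mul_le_mul_of_nonneg_left hP (by positivity)
  calc 47*d*S*u^3 = 47*d*(S*u^2*u) := by ring
    _ ≤ 47*d*(e*d*u) := h4
    _ = (47*e*d)*(d*u) := by ring
    _ ≤ (800*u^3)*(d*u) := h5
    _ = 200*d*(4*u^4) := by ring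
    _ ≤ 200*d*P := h6

/-- For integers `a ≥ 0`, `d ≥ 1`, `N ≥ 1` with
`max (N*d) (d^(4/3)) ≤ a ≤ N^(2/3)*d^(4/3)` and `a ≤ N^(4/3)*d^(4/3)/200`,
some term of the arithmetic progression `a, a+d, ..., a+N*d` is within
`C * d / a^(1/4)` of a perfect square. -/
theorem closest_square_to_AP_bound_five :
    ∃ C : ℝ, 0 < C ∧ ∀ a d N : ℤ, 0 ≤ a → 1 ≤ d → 1 ≤ N →
      max ((N : ℝ) * d) ((d : ℝ) ^ ((4 : ℝ) / 3)) ≤ (a : ℝ) →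
      (a : ℝ) ≤ (N : ℝ) ^ ((2 : ℝ) / 3) * (d : ℝ) ^ ((4 : ℝ) / 3) →
      (a : ℝ) ≤ (N : ℝ) ^ ((4 : ℝ) / 3) * (d : ℝ) ^ ((4 : ℝ) / 3) / 200 →
      ∃ n m : ℤ, 0 ≤ n ∧ n ≤ N ∧
        |((a + n * d - m ^ 2 : ℤ) : ℝ)| ≤ C * (d : ℝ) / (a : ℝ) ^ ((1 : ℝ) / 4) := by
  refine ⟨1000, by norm_num, ?_⟩
  intro a d N ha0 hd1 hN1 hmax h2 h3
  have hA0 : (0:ℝ) ≤ (a:ℝ) := by exact_mod_cast ha0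
  have hD1 : (1:ℝ) ≤ (d:ℝ) := by exact_mod_cast hd1
  have hN1r : (1:ℝ) ≤ (N:ℝ) := by exact_mod_cast hN1
  have hD0 : (0:ℝ) < (d:ℝ) := by linarith
  have hN0 : (0:ℝ) < (N:ℝ) := by linarith
  have hND : (N:ℝ)*(d:ℝ) ≤ (a:ℝ) := le_trans (le_max_left _ _) hmax
  have hA1 : (1:ℝ) ≤ (a:ℝ) := le_trans (by nlinarith) hND
  have hApos : (0:ℝ) < (a:ℝ) := by linarith
  set u : ℝ := Real.sqrt (Real.sqrt (a:ℝ)) with hudef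
  have hsA0 : (0:ℝ) ≤ Real.sqrt (a:ℝ) := Real.sqrt_nonneg _
  have hu0 : 0 < u := Real.sqrt_pos.2 (Real.sqrt_pos.2 hApos)
  have hu2 : u^2 = Real.sqrt (a:ℝ) := Real.sq_sqrt hsA0
  have hu4 : u^4 = (a:ℝ) := by
    have h2' : (Real.sqrt (a:ℝ))^2 = (a:ℝ) := Real.sq_sqrt hA0
    calc u^4 = (u^2)^2 := by ring
    _ = (a:ℝ) := by rw [hu2, h2']
  have hA14 : (a:ℝ) ^ ((1:ℝ)/4) = u := by
    rw [show (1:ℝ)/4 = (1/2)*(1/2) by norm_num, Real.rpow_mul hA0,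
        ← Real.sqrt_eq_rpow, ← Real.sqrt_eq_rpow]
  have hA12 : (a:ℝ) ^ ((1:ℝ)/2) = u^2 := by rw [← Real.sqrt_eq_rpow, hu2]
  -- A^{3/2} = u^6
  have hA32 : (a:ℝ) ^ ((3:ℝ)/2) = u^6 := by
    rw [show (3:ℝ)/2 = 1 + 1/2 by norm_num, Real.rpow_add hApos, Real.rpow_one, hA12, ← hu4]
    ring
  have hA34 : (a:ℝ) ^ ((3:ℝ)/4) = u^3 := by
    rw [show (3:ℝ)/4 = 1/2 + 1/4 by norm_num, Real.rpow_add hApos, hA12, hA14]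
    ring
  -- u^6 ≤ N d^2
  have hND2 : u^6 ≤ (N:ℝ)*(d:ℝ)^2 := by
    have h := Real.rpow_le_rpow hA0 h2 (by norm_num : (0:ℝ) ≤ 3/2)
    rw [hA32] at h
    have hR : ((N:ℝ)^((2:ℝ)/3)*(d:ℝ)^((4:ℝ)/3)) ^ ((3:ℝ)/2) = (N:ℝ)*(d:ℝ)^2 := by
      rw [Real.mul_rpow (Real.rpow_nonneg hN0.le _) (Real.rpow_nonneg hD0.le _),
          ← Real.rpow_mul hN0.le, ← Real.rpow_mul hD0.le]
      norm_num
    rw [hR] at h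
    exact h
  -- 53 u^3 ≤ N d
  have h53 : 53*u^3 ≤ (N:ℝ)*(d:ℝ) := by
    have h200 : 200*(a:ℝ) ≤ ((N:ℝ)*(d:ℝ)) ^ ((4:ℝ)/3) := by
      rw [Real.mul_rpow hN0.le hD0.le]
      linarith
    have hstep := Real.rpow_le_rpow (by positivity) h200 (by norm_num : (0:ℝ) ≤ 3/4)
    have hR2 : (((N:ℝ)*(d:ℝ)) ^ ((4:ℝ)/3)) ^ ((3:ℝ)/4) = (N:ℝ)*(d:ℝ) := by
      rw [← Real.rpow_mul (by positivity)]
      norm_num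
    have h5 : (53:ℝ) ≤ (200:ℝ)^((3:ℝ)/4) := by
      have hh : ((53:ℝ)^(4:ℕ)) ^ ((1:ℝ)/4) ≤ ((200:ℝ)^(3:ℕ)) ^ ((1:ℝ)/4) :=
        Real.rpow_le_rpow (by positivity) (by norm_num) (by norm_num)
      calc (53:ℝ) = ((53:ℝ)^(4:ℕ)) ^ ((1:ℝ)/4) := by
            rw [← Real.rpow_natCast (53:ℝ) 4, ← Real.rpow_mul (by norm_num)]
            norm_num
        _ ≤ ((200:ℝ)^(3:ℕ)) ^ ((1:ℝ)/4) := hh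
        _ = (200:ℝ)^((3:ℝ)/4) := by
            rw [← Real.rpow_natCast (200:ℝ) 3, ← Real.rpow_mul (by norm_num)]
            norm_num
    have hL2 : (53:ℝ)*u^3 ≤ (200*(a:ℝ)) ^ ((3:ℝ)/4) := by
      rw [Real.mul_rpow (by norm_num) hA0, hA34]
      exact mul_le_mul_of_nonneg_right h5 (by positivity)
    rw [hR2] at hstep
    linarith
  -- derived size facts
  have hDu : u^2 ≤ (d:ℝ) := by nlinarith [hND2, hND, hu0, hu4]
  have hNu : (N:ℝ) ≤ u^2 := by nlinarith [hND2, hND, hu0, hu4]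
  have hu53 : 53 ≤ u := by nlinarith [h53, hND, hu0, hu4]
  rw [hA14]
  clear_value u
  clear hudef hsA0 hA12 hA32 hA34 hA14 hmax h2 h3
  by_cases hx : u^3 ≤ 44*(d:ℝ)
  case pos =>
    refine ⟨0, ⌈Real.sqrt (a:ℝ)⌉, le_refl 0, by omega, ?_⟩
    have hm1 : Real.sqrt (a:ℝ) ≤ (⌈Real.sqrt (a:ℝ)⌉ : ℝ) := Int.le_ceil _
    have hm2 : (⌈Real.sqrt (a:ℝ)⌉ : ℝ) < Real.sqrt (a:ℝ) + 1 := Int.ceil_lt_add_one _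
    set mc : ℝ := (⌈Real.sqrt (a:ℝ)⌉ : ℝ) with hmc
    rw [← hu2] at hm1 hm2
    have hb : 1000 * (d:ℝ) / u = 1000*(d:ℝ)/u := rfl
    have hbpos : 3*u^2 ≤ 1000*(d:ℝ)/u := by
      rw [le_div_iff₀ hu0]
      nlinarith
    push_cast
    rw [abs_le]
    constructor
    · have h1 : mc^2 ≤ (u^2+1)^2 := by nlinarith
      nlinarith [hu4]
    · have h1 : (a:ℝ) ≤ mc^2 := by nlinarith [hu4]
      nlinarith

  case neg =>
    push_neg at hx
    have hx' : 44*(d:ℝ) < u^3 := hx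
    have hNDu : (N:ℝ)*(d:ℝ) ≤ u^4 := by rw [hu4]; exact hND
    clear hx hu2 hND hA1 hApos hN0 hD1 hN1r ha0 hA0
    have hA0 : (0:ℝ) ≤ (a:ℝ) := by nlinarith
    have hu2b : (3:ℝ) ≤ u^2 := by
      have hh : (53:ℝ)*53 ≤ u*u := mul_self_le_mul_self (by norm_num) hu53
      rw [pow_two]
      linarith
    -- N large
    have hNr2332 : (2332:ℝ) < (N:ℝ) := by nlinarith
    have hN2333 : 2333 ≤ N := by exact_mod_cast hNr2332
    set M : ℤ := N / 2 with hMdef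
    have hM1 : 2*M ≤ N := by omega
    have hM2 : N ≤ 2*M + 1 := by omega
    have hM1166 : 1166 ≤ M := by omega
    set F : ℤ → ℝ := fun y : ℤ => Real.sqrt ((a:ℝ) + (y:ℝ)*(d:ℝ)) with hFdef
    have hFfact : ∀ y : ℤ, 0 ≤ y → y ≤ N →
        (F y)^2 = (a:ℝ) + (y:ℝ)*(d:ℝ) ∧ u^2 ≤ F y ∧ F y ≤ 1.5*u^2 := by
      intro y hy0 hyN
      have hy0r : (0:ℝ) ≤ (y:ℝ) := by exact_mod_cast hy0
      have hyNr : (y:ℝ) ≤ (N:ℝ) := by exact_mod_cast hyN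
      have harg0 : (0:ℝ) ≤ (a:ℝ) + (y:ℝ)*(d:ℝ) := by nlinarith
      have h1 : (F y)^2 = (a:ℝ) + (y:ℝ)*(d:ℝ) := Real.sq_sqrt harg0
      have hFnn : 0 ≤ F y := Real.sqrt_nonneg _
      refine ⟨h1, ?_, ?_⟩
      · have : Real.sqrt ((a:ℝ)) ≤ F y := Real.sqrt_le_sqrt (by nlinarith)
        have h2 : Real.sqrt (a:ℝ) = u^2 := by
          rw [← hu4, show u^4 = (u^2)^2 by ring]
          exact Real.sqrt_sq (by positivity)
        linarith [h2 ▸ this]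
      · nlinarith [h1]
    have hdiff : ∀ y z : ℤ, 0 ≤ y → y ≤ z → z ≤ N →
        0 ≤ F z - F y ∧ ((z:ℝ) - (y:ℝ))*(d:ℝ) ≤ (F z - F y)*(3*u^2) ∧
        (F z - F y)*(2*u^2) ≤ ((z:ℝ)-(y:ℝ))*(d:ℝ) := by
      intro y z hy0 hyz hzN
      obtain ⟨e1, e2, e3⟩ := hFfact y hy0 (le_trans hyz hzN)
      obtain ⟨f1, f2, f3⟩ := hFfact z (le_trans hy0 hyz) hzN
      have hyzr : (y:ℝ) ≤ (z:ℝ) := by exact_mod_cast hyz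
      have hmono : F y ≤ F z := Real.sqrt_le_sqrt (by nlinarith)
      have hsq : (F z - F y)*(F z + F y) = ((z:ℝ) - (y:ℝ))*(d:ℝ) := by
        linear_combination f1 - e1
      refine ⟨by linarith, ?_, ?_⟩
      · have h := mul_le_mul_of_nonneg_left (show F z + F y ≤ 3*u^2 by linarith)
          (show 0 ≤ F z - F y by linarith)
        linarith [hsq ▸ h]
      · have h := mul_le_mul_of_nonneg_left (show 2*u^2 ≤ F z + F y by linarith)
          (show 0 ≤ F z - F y by linarith)
        linarith [hsq ▸ h]
    -- sweep inequality
    have hM47N : M + 47 ≤ N := by omega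
    obtain ⟨hA1f, hA2f, hA3f⟩ := hFfact 0 (by omega) (by omega)
    obtain ⟨hB1f, hB2f, hB3f⟩ := hFfact 47 (by omega) (by omega)
    obtain ⟨hG1f, hG2f, hG3f⟩ := hFfact M (by omega) (by omega)
    obtain ⟨hD1f, hD2f, hD3f⟩ := hFfact (M+47) (by omega) (by omega)
    push_cast at hA1f hB1f hG1f hD1f
    have hq1 : (F 47 - F 0)*(F 47 + F 0) = 47*(d:ℝ) := by linear_combination hB1f - hA1f
    have hq2 : (F (M+47) - F M)*(F (M+47) + F M) = 47*(d:ℝ) := by linear_combination hD1f - hG1f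
    obtain ⟨hbg0, hbg3, hbg2⟩ := hdiff 47 M (by omega) (by omega) (by omega)
    obtain ⟨hab0, -, -⟩ := hdiff 0 47 (by omega) (by omega) (by omega)
    obtain ⟨hgd0, -, -⟩ := hdiff M (M+47) (by omega) (by omega) (by omega)
    push_cast at hbg0 hbg3 hbg2 hab0 hgd0
    have hD2 : 1936*(d:ℝ)^2 ≤ u^6 := by
      have h := mul_pos (sub_pos.2 hx') (show (0:ℝ) < u^3 + 44*(d:ℝ) by positivity)
      nlinarith [h]
    have hMr : ((N:ℝ) - 1)/2 ≤ (M:ℝ) := by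
      have h := hM2
      have : (N:ℝ) ≤ 2*(M:ℝ)+1 := by exact_mod_cast h
      linarith
    have t4 : 27*u^6 ≤ 94*((M:ℝ)-47)*(d:ℝ)^2 := by
      have hh := mul_le_mul_of_nonneg_right
        (show (N:ℝ)-95 ≤ 2*((M:ℝ)-47) by linarith) (sq_nonneg (d:ℝ))
      linarith [hND2, hD2, hh, show (0:ℝ) < u^6 by positivity]
    have hsum1 : 2*(F M - F 47) ≤ (F M + F (M+47)) - (F 0 + F 47) := by linarith
    have hP3 : (F 0 + F 47)*(F M + F (M+47)) ≤ 9*u^4 := by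
      have hh := mul_le_mul (show F 0 + F 47 ≤ 3*u^2 by linarith)
        (show F M + F (M+47) ≤ 3*u^2 by linarith)
        (by positivity) (by positivity)
      nlinarith [hh]
    have hu2pos : (0:ℝ) < u^2 := by positivity
    have hPi1 : (0:ℝ) < F 0 + F 47 := by linarith
    have hPi2 : (0:ℝ) < F M + F (M+47) := by linarith
    have hPipos : 0 < (F 0 + F 47)*(F M + F (M+47)) := mul_pos hPi1 hPi2
    have hkey : (F 0 + F 47)*(F M + F (M+47)) ≤
        47*(d:ℝ)*((F M + F (M+47)) - (F 0 + F 47)) := by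
      have c1 : (F 0 + F 47)*(F M + F (M+47)) * (3*u^2) ≤ 27*u^6 := by nlinarith [hP3, hu0]
      have c2 : 94*((M:ℝ)-47)*(d:ℝ)^2 ≤ 47*(d:ℝ)*(2*(F M - F 47))*(3*u^2) := by
        nlinarith [mul_le_mul_of_nonneg_left hbg3 (show (0:ℝ) ≤ 94*(d:ℝ) by positivity)]
      have c3 : 47*(d:ℝ)*(2*(F M - F 47))*(3*u^2) ≤
          47*(d:ℝ)*((F M + F (M+47)) - (F 0 + F 47))*(3*u^2) := by
        have hh := mul_le_mul_of_nonneg_right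
          (mul_le_mul_of_nonneg_left hsum1 (show (0:ℝ) ≤ 47*(d:ℝ) by positivity))
          (show (0:ℝ) ≤ 3*u^2 by positivity)
        linarith [hh]
      have call : (F 0 + F 47)*(F M + F (M+47)) * (3*u^2) ≤
          47*(d:ℝ)*((F M + F (M+47)) - (F 0 + F 47))*(3*u^2) := by linarith
      exact le_of_mul_le_mul_right call (by positivity)
    have hid : ((F 47 - F 0) - (F (M+47) - F M))*((F 0 + F 47)*(F M + F (M+47)))
        = 47*(d:ℝ)*((F M + F (M+47)) - (F 0 + F 47)) := by
      linear_combination (F M + F (M+47))*hq1 - (F 0 + F 47)*hq2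
    have hsweep : 1 ≤ (F 47 - F 0) - (F (M+47) - F M) := by
      have h := hkey
      rw [← hid] at h
      have h1 : 1*((F 0 + F 47)*(F M + F (M+47))) ≤
          ((F 47 - F 0) - (F (M+47) - F M))*((F 0 + F 47)*(F M + F (M+47))) := by linarith
      exact le_of_mul_le_mul_right h1 hPipos
    -- slope function and p
    set s : ℤ → ℝ := fun n => F (n + 47) - F n with hsdef
    have hs0 : s 0 = F 47 - F 0 := by norm_num [hsdef]
    have hsM : s M = F (M+47) - F M := rfl
    set p : ℤ := ⌈s M⌉ with hpdef
    have hp1 : s M ≤ (p:ℝ) := Int.le_ceil _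
    have hp2 : (p:ℝ) ≤ s 0 := by
      have h := Int.ceil_lt_add_one (s M)
      rw [hs0, hsM] at *
      rw [← hpdef] at h
      linarith [hsweep]
    obtain ⟨n₀, hn₀0, hn₀M, hs1, hs2⟩ := int_ivt s (p:ℝ) M.toNat 0
      (by omega) (by rwa [hs0] at hp2) (by rw [show (0 + (M.toNat:ℤ)) = M by omega]; exact hp1)
    rw [show (0 + (M.toNat:ℤ)) = M by omega] at hn₀M
    -- K
    set K : ℤ := ⌈u^3/(4*(d:ℝ))⌉ + 3 with hKdef
    have hceq : (K:ℝ) - 3 = (⌈u^3/(4*(d:ℝ))⌉ : ℝ) := by push_cast [hKdef]; ring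
    have hK1 : u^3 ≤ 4*(d:ℝ)*((K:ℝ) - 3) := by
      have h' := (div_le_iff₀ (show (0:ℝ) < 4*(d:ℝ) by positivity)).mp
        (Int.le_ceil (u^3/(4*(d:ℝ))))
      rw [← hceq] at h'
      linarith
    have hK2 : 4*(d:ℝ)*((K:ℝ)-4) ≤ u^3 := by
      have h' := Int.ceil_lt_add_one (u^3/(4*(d:ℝ)))
      rw [← hceq] at h'
      have h2 : (K:ℝ) - 4 < u^3/(4*(d:ℝ)) := by linarith
      have h3 := (lt_div_iff₀ (show (0:ℝ) < 4*(d:ℝ) by positivity)).mp h2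
      linarith
    have hK14r : (14:ℝ) < (K:ℝ) := by
      by_contra hcon
      push_neg at hcon
      have h1 : 4*(d:ℝ)*((K:ℝ)-3) ≤ 4*(d:ℝ)*11 := by
        have := mul_le_mul_of_nonneg_left (show (K:ℝ)-3 ≤ 11 by linarith)
          (show (0:ℝ) ≤ 4*(d:ℝ) by positivity)
        linarith
      linarith [hK1, hx']
    have hK14 : 14 ≤ K := by exact_mod_cast hK14r.le
    -- room
    have hroomr : ((n₀:ℝ) + 47*(K:ℝ)) * (4*(d:ℝ)) ≤ (N:ℝ) * (4*(d:ℝ)) := by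
      have hc1 : (n₀:ℝ) ≤ (M:ℝ) - 1 := by
        have h : n₀ ≤ M - 1 := by omega
        have h2 : ((n₀:ℤ):ℝ) ≤ ((M-1:ℤ):ℝ) := by exact_mod_cast h
        push_cast at h2
        linarith
      have hc2 : (M:ℝ) ≤ (N:ℝ)/2 := by
        have h2 : 2*(M:ℝ) ≤ (N:ℝ) := by exact_mod_cast hM1
        linarith
      have hc3 : 4*(d:ℝ)*(K:ℝ) ≤ u^3 + 16*(d:ℝ) := by linarith [hK2]
      -- goal: (n₀ + 47K)*4d ≤ N*4d
      have hc4 : (n₀:ℝ)*(4*(d:ℝ)) ≤ ((N:ℝ)/2 - 1/2)*(4*(d:ℝ)) := by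
        have := mul_le_mul_of_nonneg_right (show (n₀:ℝ) ≤ (N:ℝ)/2 - 1/2 by linarith [hc1, hc2])
          (show (0:ℝ) ≤ 4*(d:ℝ) by positivity)
        linarith
      have hc5 : 47*(4*(d:ℝ)*(K:ℝ)) ≤ 47*u^3 + 752*(d:ℝ) := by linarith
      -- need: (N/2 - 1/2)*4d + 47u³ + 752d ≤ 4dN  ⟸ 47u³ + 750d ≤ 2dN
      have hc6 : 47*u^3 + 752*(d:ℝ) ≤ 2*(d:ℝ)*(N:ℝ) := by
        have h59 : 59*u^3 ≥ 59*44*(d:ℝ) := by linarith [hx']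
        linarith [h53]
      linarith [hc4, hc5, hc6, hD0]
    have hroomR : (n₀:ℝ) + 47*(K:ℝ) ≤ (N:ℝ) :=
      le_of_mul_le_mul_right (by linarith [hroomr]) (show (0:ℝ) < 4*(d:ℝ) by positivity)
    have hroom : n₀ + 47*K ≤ N := by exact_mod_cast hroomR
    -- G and its decrease
    set G : ℤ → ℝ := fun j => F (n₀ + 47*j) - (p:ℝ)*(j:ℝ) with hGdef
    obtain ⟨hw1, hw2, hw3⟩ := hFfact (n₀+1) (by omega) (by omega)
    obtain ⟨hz1, hz2, hz3⟩ := hFfact (n₀+48) (by omega) (by omega)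
    obtain ⟨hy1a, hy1b, hy1c⟩ := hFfact (n₀+47) (by omega) (by omega)
    obtain ⟨hyKa, hyKb, hyKc⟩ := hFfact (n₀+47*K) (by omega) hroom
    push_cast at hw1 hz1 hy1a hyKa
    have hq1' : (F (n₀+48) - F (n₀+1))*(F (n₀+48) + F (n₀+1)) = 47*(d:ℝ) := by
      linear_combination hz1 - hw1
    have hq2' : (F (n₀+47*K) - F (n₀+47))*(F (n₀+47*K) + F (n₀+47)) = 47*((K:ℝ)-1)*(d:ℝ) := by
      linear_combination hyKa - hy1a
    obtain ⟨hm1, hlow, -⟩ := hdiff (n₀+48) (n₀+47*K) (by omega) (by omega) hroom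
    push_cast at hlow
    obtain ⟨hm2, -, -⟩ := hdiff (n₀+1) (n₀+47) (by omega) (by omega) (by omega)
    have hc0 : 27*u^6 ≤ 432*(d:ℝ)^2*((K:ℝ)-3)^2 := sq_aux _ _ _ hu0.le hK1
    have hpoly := poly_aux (K:ℝ) (by linarith [hK14r])
    have hpoly2 : 432*(d:ℝ)^2*((K:ℝ)-3)^2 ≤ 47*((K:ℝ)-1)*(47*(K:ℝ)-48)*(d:ℝ)^2 := by
      have hh := mul_le_mul_of_nonneg_right hpoly (sq_nonneg (d:ℝ))
      linarith
    have hcoef : (0:ℝ) ≤ 47*((K:ℝ)-1)*(d:ℝ) := by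
      have h1 : (0:ℝ) ≤ (K:ℝ)-1 := by linarith
      have := mul_nonneg (mul_nonneg (by norm_num : (0:ℝ) ≤ (47:ℝ)) h1) hD0.le
      linarith
    have hc3 : 47*((K:ℝ)-1)*(47*(K:ℝ)-48)*(d:ℝ)^2 ≤
        47*((K:ℝ)-1)*(d:ℝ)*((F (n₀+47*K) - F (n₀+48))*(3*u^2)) := by
      have hh := mul_le_mul_of_nonneg_left
        (show (47*(K:ℝ)-48)*(d:ℝ) ≤ (F (n₀+47*K) - F (n₀+48))*(3*u^2) by linarith [hlow]) hcoef
      linarith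
    have hmono3 : F (n₀+47*K) - F (n₀+48) ≤
        (F (n₀+47*K) + F (n₀+47)) - (F (n₀+48) + F (n₀+1)) := by linarith [hm2]
    have hc4 : 47*((K:ℝ)-1)*(d:ℝ)*((F (n₀+47*K) - F (n₀+48))*(3*u^2)) ≤
        47*((K:ℝ)-1)*(d:ℝ)*(((F (n₀+47*K) + F (n₀+47)) - (F (n₀+48) + F (n₀+1)))*(3*u^2)) := by
      have h3u : (0:ℝ) ≤ 3*u^2 := by positivity
      have hh := mul_le_mul_of_nonneg_left (mul_le_mul_of_nonneg_right hmono3 h3u) hcoef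
      linarith
    have hP3' : (F (n₀+48) + F (n₀+1))*(F (n₀+47*K) + F (n₀+47)) ≤ 9*u^4 := by
      have hh := mul_le_mul (show F (n₀+48) + F (n₀+1) ≤ 3*u^2 by linarith)
        (show F (n₀+47*K) + F (n₀+47) ≤ 3*u^2 by linarith)
        (by linarith) (by positivity)
      linarith [hh]
    have hPi3 : (0:ℝ) < (F (n₀+48) + F (n₀+1))*(F (n₀+47*K) + F (n₀+47)) :=
      mul_pos (by linarith) (by linarith)
    have hkey2 : (F (n₀+48) + F (n₀+1))*(F (n₀+47*K) + F (n₀+47)) ≤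
        47*((K:ℝ)-1)*(d:ℝ)*(((F (n₀+47*K) + F (n₀+47)) - (F (n₀+48) + F (n₀+1)))) := by
      have c1 : (F (n₀+48) + F (n₀+1))*(F (n₀+47*K) + F (n₀+47))*(3*u^2) ≤ 27*u^6 := by
        have hh := mul_le_mul_of_nonneg_right hP3' (show (0:ℝ) ≤ 3*u^2 by positivity)
        linarith
      have call : (F (n₀+48) + F (n₀+1))*(F (n₀+47*K) + F (n₀+47))*(3*u^2) ≤
          47*((K:ℝ)-1)*(d:ℝ)*(((F (n₀+47*K) + F (n₀+47)) - (F (n₀+48) + F (n₀+1))))*(3*u^2) := by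
        linarith [c1, hc0, hpoly2, hc3, hc4]
      exact le_of_mul_le_mul_right call (by positivity)
    have hid2 : (((K:ℝ)-1)*(F (n₀+48) - F (n₀+1)) - (F (n₀+47*K) - F (n₀+47)))*
        ((F (n₀+48) + F (n₀+1))*(F (n₀+47*K) + F (n₀+47)))
        = 47*((K:ℝ)-1)*(d:ℝ)*(((F (n₀+47*K) + F (n₀+47)) - (F (n₀+48) + F (n₀+1)))) := by
      linear_combination ((K:ℝ)-1)*(F (n₀+47*K) + F (n₀+47))*hq1' - (F (n₀+48) + F (n₀+1))*hq2'
    have hcross : 1 ≤ ((K:ℝ)-1)*(F (n₀+48) - F (n₀+1)) - (F (n₀+47*K) - F (n₀+47)) := by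
      have h1 : 1*((F (n₀+48) + F (n₀+1))*(F (n₀+47*K) + F (n₀+47))) ≤
          (((K:ℝ)-1)*(F (n₀+48) - F (n₀+1)) - (F (n₀+47*K) - F (n₀+47)))*
          ((F (n₀+48) + F (n₀+1))*(F (n₀+47*K) + F (n₀+47))) := by
        rw [hid2]; linarith [hkey2]
      exact le_of_mul_le_mul_right h1 hPi3
    have hs2' : F (n₀+48) - F (n₀+1) ≤ (p:ℝ) := by
      have h := hs2
      simp only [hsdef] at h
      rw [show n₀ + 1 + 47 = n₀ + 48 by ring] at h
      exact h
    have hGdec : 1 ≤ G 1 - G K := by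
      have hG1 : G 1 = F (n₀ + 47) - (p:ℝ) := by
        simp only [hGdef]
        norm_num
      have hGKv : G K = F (n₀ + 47*K) - (p:ℝ)*(K:ℝ) := by simp only [hGdef]
      have hpk : ((K:ℝ)-1)*(F (n₀+48) - F (n₀+1)) ≤ ((K:ℝ)-1)*(p:ℝ) :=
        mul_le_mul_of_nonneg_left hs2' (by linarith)
      rw [hG1, hGKv]
      linarith [hcross, hpk]
    set I : ℤ := ⌈G K⌉ with hIdef
    have hI1 : G K ≤ (I:ℝ) := Int.le_ceil _
    have hI2 : (I:ℝ) ≤ G 1 := by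
      have hh := Int.ceil_lt_add_one (G K)
      rw [← hIdef] at hh
      linarith [hGdec]
    obtain ⟨k, hk1, hk2, hk3, hk4⟩ := int_ivt G (I:ℝ) (K-1).toNat 1
      (by omega) hI2 (by rw [show (1 + ((K-1).toNat:ℤ)) = K by omega]; exact hI1)
    have hkK : k < K := by omega
    -- step bound
    have hb2range : n₀ + 47*(k+1) ≤ N := by
      have : 47*(k+1) ≤ 47*K := by omega
      omega
    obtain ⟨ha1s, ha1l, ha1u⟩ := hFfact n₀ (by omega) (by omega)
    obtain ⟨hb1s, hb1l, hb1u⟩ := hFfact (n₀+47*k) (by omega) (by omega)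
    obtain ⟨hb2s, hb2l, hb2u⟩ := hFfact (n₀+47*(k+1)) (by omega) hb2range
    push_cast at ha1s hb1s hb2s
    have hqa : (F (n₀+47) - F n₀)*(F (n₀+47) + F n₀) = 47*(d:ℝ) := by
      linear_combination hy1a - ha1s
    have hqb : (F (n₀+47*(k+1)) - F (n₀+47*k))*(F (n₀+47*(k+1)) + F (n₀+47*k)) = 47*(d:ℝ) := by
      linear_combination hb2s - hb1s
    obtain ⟨hmb, -, hupper⟩ := hdiff n₀ (n₀+47*(k+1)) (by omega) (by omega) hb2range
    push_cast at hupper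
    obtain ⟨hma, -, -⟩ := hdiff n₀ (n₀+47) (by omega) (by omega) (by omega)
    obtain ⟨hmc, -, -⟩ := hdiff (n₀+47*k) (n₀+47*(k+1)) (by omega) (by omega) hb2range
    have hid3 : ((F (n₀+47) - F n₀) - (F (n₀+47*(k+1)) - F (n₀+47*k)))*
        ((F (n₀+47) + F n₀)*(F (n₀+47*(k+1)) + F (n₀+47*k)))
        = 47*(d:ℝ)*((F (n₀+47*(k+1)) + F (n₀+47*k)) - (F (n₀+47) + F n₀)) := by
      linear_combination (F (n₀+47*(k+1)) + F (n₀+47*k))*hqa - (F (n₀+47) + F n₀)*hqb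
    have hSu : ((F (n₀+47*(k+1)) + F (n₀+47*k)) - (F (n₀+47) + F n₀))*u^2 ≤
        (47*(k:ℝ)+47)*(d:ℝ) := by
      have hs' : (F (n₀+47*(k+1)) + F (n₀+47*k)) - (F (n₀+47) + F n₀) ≤
          2*(F (n₀+47*(k+1)) - F n₀) := by linarith [hma, hmc]
      have hh := mul_le_mul_of_nonneg_right hs' (sq_nonneg u)
      linarith [hupper, hh]
    have hce : 47*(k:ℝ)+47 ≤ 47*(K:ℝ) := by
      have h1 : k + 1 ≤ K := by omega
      have h2 : (k:ℝ) + 1 ≤ (K:ℝ) := by exact_mod_cast h1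
      linarith
    have he : 47*(47*(K:ℝ))*(d:ℝ) ≤ 800*u^3 := by linarith [hK2, hx']
    have hP4 : 4*u^4 ≤ (F (n₀+47) + F n₀)*(F (n₀+47*(k+1)) + F (n₀+47*k)) := by
      have hh := mul_le_mul (show 2*u^2 ≤ F (n₀+47) + F n₀ by linarith)
        (show 2*u^2 ≤ F (n₀+47*(k+1)) + F (n₀+47*k) by linarith)
        (by positivity) (by linarith)
      linarith [hh]
    have hPpos : (0:ℝ) < (F (n₀+47) + F n₀)*(F (n₀+47*(k+1)) + F (n₀+47*k)) :=
      mul_pos (by linarith) (by linarith)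
    have hXu : ((F (n₀+47) - F n₀) - (F (n₀+47*(k+1)) - F (n₀+47*k)))*u^3 ≤ 200*(d:ℝ) := by
      have hchain := step_chain (d:ℝ) u
        ((F (n₀+47) + F n₀)*(F (n₀+47*(k+1)) + F (n₀+47*k)))
        ((F (n₀+47*(k+1)) + F (n₀+47*k)) - (F (n₀+47) + F n₀))
        (47*(k:ℝ)+47) (47*(K:ℝ)) hD0 hu0 hP4 hSu hce he
      have h1 : ((F (n₀+47) - F n₀) - (F (n₀+47*(k+1)) - F (n₀+47*k)))*u^3*
          ((F (n₀+47) + F n₀)*(F (n₀+47*(k+1)) + F (n₀+47*k))) ≤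
          200*(d:ℝ)*((F (n₀+47) + F n₀)*(F (n₀+47*(k+1)) + F (n₀+47*k))) := by
        calc ((F (n₀+47) - F n₀) - (F (n₀+47*(k+1)) - F (n₀+47*k)))*u^3*
            ((F (n₀+47) + F n₀)*(F (n₀+47*(k+1)) + F (n₀+47*k)))
            = (((F (n₀+47) - F n₀) - (F (n₀+47*(k+1)) - F (n₀+47*k)))*
              ((F (n₀+47) + F n₀)*(F (n₀+47*(k+1)) + F (n₀+47*k))))*u^3 := by ring
          _ = 47*(d:ℝ)*((F (n₀+47*(k+1)) + F (n₀+47*k)) - (F (n₀+47) + F n₀))*u^3 := by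
              rw [hid3]
          _ ≤ 200*(d:ℝ)*((F (n₀+47) + F n₀)*(F (n₀+47*(k+1)) + F (n₀+47*k))) := hchain
      exact le_of_mul_le_mul_right h1 hPpos
    have hu3pos : (0:ℝ) < u^3 := by positivity
    have hs1' : (p:ℝ) ≤ F (n₀+47) - F n₀ := by
      have h := hs1
      simp only [hsdef] at h
      exact h
    have hGkv : G k = F (n₀+47*k) - (p:ℝ)*(k:ℝ) := by simp only [hGdef]
    have hGk1v : G (k+1) = F (n₀+47*(k+1)) - (p:ℝ)*((k:ℝ)+1) := by
      simp only [hGdef]; push_cast; ring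
    have hstep' : (G k - G (k+1))*u^3 ≤ 200*(d:ℝ) := by
      have hGdiff : G k - G (k+1) ≤
          (F (n₀+47) - F n₀) - (F (n₀+47*(k+1)) - F (n₀+47*k)) := by
        rw [hGkv, hGk1v]
        linarith [hs1']
      have hh := mul_le_mul_of_nonneg_right hGdiff (show (0:ℝ) ≤ u^3 by positivity)
      linarith [hXu]
    have h100 : 100*(d:ℝ) ≤ 3*u^3 := by linarith [hx']
    -- final choice
    by_cases hcase : (G k - (I:ℝ))*u^3 ≤ 100*(d:ℝ)
    · refine ⟨n₀ + 47*k, I + p*k, by omega, by omega, ?_⟩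
      push_cast
      have hfm : F (n₀+47*k) - ((I:ℝ) + (p:ℝ)*(k:ℝ)) = G k - (I:ℝ) := by
        rw [hGkv]; ring
      have h0 : 0 ≤ F (n₀+47*k) - ((I:ℝ) + (p:ℝ)*(k:ℝ)) := by rw [hfm]; linarith [hk3]
      have h1 : (F (n₀+47*k) - ((I:ℝ) + (p:ℝ)*(k:ℝ)))*u^3 ≤ 100*(d:ℝ) := by
        rw [hfm]; linarith [hcase]
      have hE3 : F (n₀+47*k) - ((I:ℝ) + (p:ℝ)*(k:ℝ)) ≤ 3 := by
        have hh : (F (n₀+47*k) - ((I:ℝ) + (p:ℝ)*(k:ℝ)))*u^3 ≤ 3*u^3 := by linarith [h1, h100]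
        exact le_of_mul_le_mul_right hh hu3pos
      have hmv0 : 0 ≤ (I:ℝ) + (p:ℝ)*(k:ℝ) := by linarith [hb1l, hE3, hu2b]
      have hv : (a:ℝ) + ((n₀:ℝ) + 47*(k:ℝ))*(d:ℝ) - ((I:ℝ) + (p:ℝ)*(k:ℝ))^2 =
          (F (n₀+47*k) - ((I:ℝ) + (p:ℝ)*(k:ℝ)))*(F (n₀+47*k) + ((I:ℝ) + (p:ℝ)*(k:ℝ))) := by
        linear_combination -hb1s
      have hsumpos : 0 ≤ F (n₀+47*k) + ((I:ℝ) + (p:ℝ)*(k:ℝ)) := by linarith [hb1l]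
      have hsum3 : F (n₀+47*k) + ((I:ℝ) + (p:ℝ)*(k:ℝ)) ≤ 3*u^2 := by linarith [hb1u, h0]
      rw [hv, abs_of_nonneg (mul_nonneg h0 hsumpos), le_div_iff₀ hu0]
      have m1 := mul_le_mul_of_nonneg_right h1 hsumpos
      have m2 := mul_le_mul_of_nonneg_left hsum3 (show (0:ℝ) ≤ 100*(d:ℝ) by positivity)
      have m3 : ((F (n₀+47*k) - ((I:ℝ) + (p:ℝ)*(k:ℝ)))*
          (F (n₀+47*k) + ((I:ℝ) + (p:ℝ)*(k:ℝ)))*u)*u^2 ≤ (300*(d:ℝ))*u^2 := by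
        linarith [m1, m2]
      have m4 : (F (n₀+47*k) - ((I:ℝ) + (p:ℝ)*(k:ℝ)))*
          (F (n₀+47*k) + ((I:ℝ) + (p:ℝ)*(k:ℝ)))*u ≤ 300*(d:ℝ) :=
        le_of_mul_le_mul_right m3 hu2pos
      linarith [m4, hD0]
    · push_neg at hcase
      refine ⟨n₀ + 47*(k+1), I + p*(k+1), by omega, hb2range, ?_⟩
      push_cast
      have hfm : ((I:ℝ) + (p:ℝ)*((k:ℝ)+1)) - F (n₀+47*(k+1)) = (I:ℝ) - G (k+1) := by
        rw [hGk1v]; ring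
      have h0 : 0 ≤ ((I:ℝ) + (p:ℝ)*((k:ℝ)+1)) - F (n₀+47*(k+1)) := by
        rw [hfm]; linarith [hk4]
      have h1 : (((I:ℝ) + (p:ℝ)*((k:ℝ)+1)) - F (n₀+47*(k+1)))*u^3 ≤ 100*(d:ℝ) := by
        rw [hfm]
        have hd1' : ((I:ℝ) - G (k+1))*u^3 = (G k - G (k+1))*u^3 - (G k - (I:ℝ))*u^3 := by ring
        rw [hd1']
        linarith [hstep', hcase]
      have hE3 : ((I:ℝ) + (p:ℝ)*((k:ℝ)+1)) - F (n₀+47*(k+1)) ≤ 3 := by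
        have hh : (((I:ℝ) + (p:ℝ)*((k:ℝ)+1)) - F (n₀+47*(k+1)))*u^3 ≤ 3*u^3 := by
          linarith [h1, h100]
        exact le_of_mul_le_mul_right hh hu3pos
      have hv : (a:ℝ) + ((n₀:ℝ) + 47*((k:ℝ)+1))*(d:ℝ) - ((I:ℝ) + (p:ℝ)*((k:ℝ)+1))^2 =
          -((((I:ℝ) + (p:ℝ)*((k:ℝ)+1)) - F (n₀+47*(k+1)))*
            (((I:ℝ) + (p:ℝ)*((k:ℝ)+1)) + F (n₀+47*(k+1)))) := by
        linear_combination -hb2s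
      have hsumpos : 0 ≤ ((I:ℝ) + (p:ℝ)*((k:ℝ)+1)) + F (n₀+47*(k+1)) := by
        linarith [hb2l, h0]
      have hsum4 : ((I:ℝ) + (p:ℝ)*((k:ℝ)+1)) + F (n₀+47*(k+1)) ≤ 4*u^2 := by
        linarith [hb2u, hE3, hu2b]
      rw [hv, abs_neg, abs_of_nonneg (mul_nonneg h0 hsumpos), le_div_iff₀ hu0]
      have m1 := mul_le_mul_of_nonneg_right h1 hsumpos
      have m2 := mul_le_mul_of_nonneg_left hsum4 (show (0:ℝ) ≤ 100*(d:ℝ) by positivity)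
      have m3 : ((((I:ℝ) + (p:ℝ)*((k:ℝ)+1)) - F (n₀+47*(k+1)))*
          (((I:ℝ) + (p:ℝ)*((k:ℝ)+1)) + F (n₀+47*(k+1)))*u)*u^2 ≤ (400*(d:ℝ))*u^2 := by
        linarith [m1, m2]
      have m4 : (((I:ℝ) + (p:ℝ)*((k:ℝ)+1)) - F (n₀+47*(k+1)))*
          (((I:ℝ) + (p:ℝ)*((k:ℝ)+1)) + F (n₀+47*(k+1)))*u ≤ 400*(d:ℝ) :=
        le_of_mul_le_mul_right m3 hu2pos
      linarith [m4, hD0]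
end

section
/- There exists an absolute constant C > 0 such that for all integers a ≥ 0, d ≥ 1, N ≥ 1 satisfying a ≤ N²·d/1800, there exist an integer n with 0 ≤ n ≤ N and an integer m with |a + n·d − m²| ≤ C · d^{3/4}. -/
set_option maxHeartbeats 1000000

lemma int_sqrt_ex (a : ℤ) (ha : 0 ≤ a) : ∃ s : ℤ, 0 ≤ s ∧ s^2 ≤ a ∧ a < (s+1)^2 := by
  refine ⟨(Nat.sqrt a.toNat : ℤ), by positivity, ?_, ?_⟩
  · have h := Nat.sqrt_le' a.toNat
    have h2 : ((Nat.sqrt a.toNat ^ 2 : ℕ) : ℤ) ≤ ((a.toNat : ℤ)) := by exact_mod_cast h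
    rw [Int.toNat_of_nonneg ha] at h2
    push_cast at h2 ⊢
    linarith
  · have h := Nat.lt_succ_sqrt' a.toNat
    have h2 : ((a.toNat : ℤ)) < (((Nat.sqrt a.toNat).succ ^ 2 : ℕ) : ℤ) := by exact_mod_cast h
    rw [Int.toNat_of_nonneg ha] at h2
    have : (((Nat.sqrt a.toNat).succ ^ 2 : ℕ) : ℤ) = ((Nat.sqrt a.toNat : ℤ) + 1)^2 := by
      push_cast [Nat.succ_eq_add_one]; ring
    rwa [this] at h2

lemma exists_good_t (d M V : ℤ) (hd : 1 ≤ d) (hV : 1 ≤ V) :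
    ∃ t c : ℤ, 1 ≤ t ∧ t ≤ V ∧ |c| * V < d ∧ d ∣ 2*M*t - c := by
  have hd0 : (0:ℤ) < d := hd
  have hdne : d ≠ 0 := by omega
  set f : ℕ → ℤ := fun i => (2*M*i) % d with hf
  have hf0 : ∀ i, 0 ≤ f i := fun i => Int.emod_nonneg _ hdne
  have hfd : ∀ i, f i < d := fun i => Int.emod_lt_of_pos _ hd0
  set g : ℕ → ℤ := fun i => f i * V / d with hg
  have key : ∀ x y : ℕ, x < y → y < V.toNat + 1 → g x = g y →
      ∃ t c : ℤ, 1 ≤ t ∧ t ≤ V ∧ |c| * V < d ∧ d ∣ 2*M*t - c := by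
    intro x y hxy hyV hgxy
    have hxy' : (x:ℤ) < (y:ℤ) := by exact_mod_cast hxy
    refine ⟨(y:ℤ) - (x:ℤ), f y - f x, by omega, ?_, ?_, ?_⟩
    · have : (y:ℤ) ≤ (V.toNat : ℤ) := by exact_mod_cast Nat.lt_succ_iff.mp hyV
      rw [Int.toNat_of_nonneg (by omega : (0:ℤ) ≤ V)] at this
      have hx0 : (0:ℤ) ≤ (x:ℤ) := Int.natCast_nonneg x
      omega
    · have e1 : f y * V = d * g y + (f y * V) % d := (Int.mul_ediv_add_emod _ _).symm
      have e2 : f x * V = d * g x + (f x * V) % d := (Int.mul_ediv_add_emod _ _).symm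
      have r1 : 0 ≤ (f y * V) % d := Int.emod_nonneg _ hdne
      have r2 : (f y * V) % d < d := Int.emod_lt_of_pos _ hd0
      have r3 : 0 ≤ (f x * V) % d := Int.emod_nonneg _ hdne
      have r4 : (f x * V) % d < d := Int.emod_lt_of_pos _ hd0
      have key2 : (f y - f x) * V = (f y * V) % d - (f x * V) % d := by
        calc (f y - f x) * V = f y * V - f x * V := by ring
          _ = (d * g y + (f y * V) % d) - (d * g x + (f x * V) % d) := by
              rw [← e1, ← e2]
          _ = (f y * V) % d - (f x * V) % d := by rw [hgxy]; ring
      have habs : |(f y - f x) * V| < d := by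
        rw [key2, abs_sub_lt_iff]; omega
      rwa [abs_mul, abs_of_pos (by omega : (0:ℤ) < V)] at habs
    · have ey : f y = 2*M*y - d * ((2*M*y)/d) := Int.emod_def _ _
      have ex : f x = 2*M*x - d * ((2*M*x)/d) := Int.emod_def _ _
      refine ⟨(2*M*(y:ℤ))/d - (2*M*(x:ℤ))/d, ?_⟩
      rw [ey, ex]; push_cast; ring
  have hmap : ∀ i ∈ Finset.range (V.toNat + 1), g i ∈ Finset.Ico (0:ℤ) V := by
    intro i _
    simp only [Finset.mem_Ico]
    refine ⟨Int.ediv_nonneg (mul_nonneg (hf0 i) (by omega)) (by omega), ?_⟩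
    rw [Int.ediv_lt_iff_lt_mul hd0]
    calc f i * V < d * V := mul_lt_mul_of_pos_right (hfd i) (by omega)
      _ = V * d := by ring
  have hcard : (Finset.Ico (0:ℤ) V).card < (Finset.range (V.toNat + 1)).card := by
    rw [Int.card_Ico, Finset.card_range]; omega
  obtain ⟨x, hx, y, hy, hne, heq⟩ :=
    Finset.exists_ne_map_eq_of_card_lt_of_maps_to hcard hmap
  simp only [Finset.mem_range] at hx hy
  rcases hne.lt_or_gt with hlt | hlt
  · exact key x y hlt hy heq
  · exact key y x hlt hx heq.symm

lemma lemA (a d N : ℤ) (ha : 0 ≤ a) (hd : 1 ≤ d) (hN : 1 ≤ N) (hb : 1800*a ≤ N^2*d) :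
    ∃ n m : ℤ, 0 ≤ n ∧ n ≤ N ∧ |a + n*d - m^2| < d := by
  obtain ⟨s, hs0, hs1, hs2⟩ := int_sqrt_ex a ha
  have hNd1 : 1 ≤ N*d := by nlinarith
  have hsNd : 2*s + 1 ≤ N*d := by
    rcases eq_or_lt_of_le hs0 with h0 | h0
    · omega
    · have h1 : (2*s+1)^2 ≤ (N*d)^2 := by nlinarith
      nlinarith
  set M := s + 1 with hM
  have hq0 : 0 ≤ M^2 - a := by nlinarith
  set q := (M^2 - a) / d with hqdef
  set r := (M^2 - a) % d with hrdef
  have hdr : M^2 - a = d*q + r := (Int.mul_ediv_add_emod _ _).symm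
  have hr0 : 0 ≤ r := Int.emod_nonneg _ (by omega)
  have hrd : r < d := Int.emod_lt_of_pos _ (by omega)
  have hqn : 0 ≤ q := Int.ediv_nonneg hq0 (by omega)
  have hqN : q ≤ N := by nlinarith
  refine ⟨q, M, hqn, hqN, ?_⟩
  have : a + q*d - M^2 = -r := by linear_combination -hdr
  rw [this, abs_neg, abs_of_nonneg hr0]; exact hrd

lemma pow4_le {x y : ℝ} (hy : 0 ≤ y) (h : x^4 ≤ y^4) : x ≤ y :=
  le_of_pow_le_pow_left₀ (by norm_num) hy h

lemma rpow_pow_eq (d : ℝ) (hd : 0 ≤ d) (e : ℝ) (k : ℕ) : (d ^ e)^(k:ℕ) = d ^ (e*k) := by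
  rw [Real.rpow_mul hd, Real.rpow_natCast]

lemma mainCase (a d N : ℤ) (ha : 0 ≤ a) (hd : (10:ℤ)^24 < d) (hN : 1 ≤ N)
    (hb : 1800 * a ≤ N^2 * d) (hbig : d^3 < a^2) :
    ∃ n m : ℤ, 0 ≤ n ∧ n ≤ N ∧
      |((a + n * d - m ^ 2 : ℤ) : ℝ)| ≤ 10^6 * (d : ℝ) ^ ((3 : ℝ) / 4) := by
  have hd1 : (1:ℤ) ≤ d := le_trans (by norm_num) hd.le
  have hd0 : (0:ℤ) < d := hd1
  -- square roots
  obtain ⟨s, hs0, hs1, hs2⟩ := int_sqrt_ex a ha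
  set M := s + 1 with hMdef
  have hM1 : 1 ≤ M := by omega
  have haM : a < M^2 := hs2
  have hM2a : M^2 ≤ a + 2*s + 1 := by
    have h1 : M^2 = s^2 + 2*s + 1 := by rw [hMdef]; ring
    linarith only [h1, hs1]
  obtain ⟨u, hu0, hu1, hu2⟩ := int_sqrt_ex d (by omega)
  have hu12 : (10:ℤ)^12 ≤ u := by
    by_contra hcon
    push_neg at hcon
    have h1 : u + 1 ≤ 10^12 := by omega
    have h2 : (u+1)^2 ≤ ((10:ℤ)^12)^2 := pow_le_pow_left₀ (by omega) h1 2
    norm_num at h2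
    omega
  obtain ⟨v, hv0, hv1, hv2⟩ := int_sqrt_ex u (by omega)
  have hv6 : (10:ℤ)^6 ≤ v := by
    by_contra hcon
    push_neg at hcon
    have h1 : v + 1 ≤ 10^6 := by omega
    have h2 : (v+1)^2 ≤ ((10:ℤ)^6)^2 := pow_le_pow_left₀ (by omega) h1 2
    norm_num at h2
    omega
  set V := v + 1 with hVdef
  have hVu : V ≤ u := by
    have h2v : 2*v ≤ v*v := mul_le_mul_of_nonneg_right (by omega) (by omega)
    have hvv : v^2 = v*v := by ring
    omega
  have hV4 : d < V^4 := by
    have h1 : u + 1 ≤ V^2 := by omega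
    have h2 : (u+1)^2 ≤ (V^2)^2 := pow_le_pow_left₀ (by omega) h1 2
    have h3 : (V^2)^2 = V^4 := by ring
    omega
  have hv4 : v^4 ≤ d := by
    have h2 : (v^2)^2 ≤ u^2 := pow_le_pow_left₀ (by positivity) hv1 2
    have h3 : (v^2)^2 = v^4 := by ring
    omega
  -- pigeonhole
  obtain ⟨t, c, ht1, htV, hcV, hdvd⟩ := exists_good_t d M V hd1 (by omega)
  obtain ⟨W, hW⟩ := hdvd
  have ht0 : (0:ℤ) < t := ht1
  -- K
  set K := (7*u) / t with hKdef
  have hKt_le : K * t ≤ 7 * u := Int.ediv_mul_le _ (by omega)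
  have hKt_gt : 7*u < (K + 1) * t := Int.lt_ediv_add_one_mul_self _ ht0
  have htu : t ≤ u := le_trans htV hVu
  have hKt_ge : 6 * u ≤ K * t := by
    have h1 : (K+1)*t = K*t + t := by ring
    linarith only [h1, hKt_gt, htu, hu12]
  have hK1 : 1 ≤ K := by
    have hK0 : 0 ≤ K := Int.ediv_nonneg (by positivity) ht0.le
    rcases eq_or_lt_of_le hK0 with h | h
    · exfalso
      have : K * t = 0 := by rw [← h, zero_mul]
      omega
    · omega
  set S := |c| + 4*K*t^2 + t^2 with hSdef
  have hc0 : 0 ≤ |c| := abs_nonneg c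
  -- the walk
  set h : ℕ → ℤ := fun j => ((M + (j:ℤ)*t)^2 - a) % d with hh
  have hh0 : ∀ j, 0 ≤ h j := fun j => Int.emod_nonneg _ (by omega)
  have hhd : ∀ j, h j < d := fun j => Int.emod_lt_of_pos _ hd0
  have hstep : ∀ j : ℕ, h (j+1) = (h j + (c + (2*(j:ℤ)+1)*t^2)) % d := by
    intro j
    have expand : (M + (((j:ℕ)+1:ℕ):ℤ)*t)^2 - a
        = (((M + (j:ℤ)*t)^2 - a) + (c + (2*(j:ℤ)+1)*t^2)) + d*W := by
      push_cast
      linear_combination hW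
    show ((M + (((j:ℕ)+1:ℕ):ℤ)*t)^2 - a) % d = _
    rw [expand, Int.add_mul_emod_self_left, ← Int.emod_add_emod]
  -- main claim
  have claim : ∃ j : ℕ, (j:ℤ) ≤ 2*K ∧ (h j ≤ S ∨ d - S ≤ h j) := by
    by_contra hcon
    push_neg at hcon
    have hcon' : ∀ j : ℕ, (j:ℤ) ≤ 2*K → S < h j ∧ h j < d - S := hcon
    have lin : ∀ j : ℕ, (j:ℤ) ≤ 2*K → h j = h 0 + (c*(j:ℤ) + t^2*(j:ℤ)^2) := by
      intro j
      induction j with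
      | zero => intro _; push_cast; ring
      | succ j ih =>
        intro hj1
        have hj1' : ((j:ℤ)+1) ≤ 2*K := by exact_mod_cast hj1
        have hj : (j:ℤ) ≤ 2*K := by omega
        have hIH := ih hj
        have hjS := hcon' j hj
        have hj0' : (0:ℤ) ≤ (j:ℤ) := by positivity
        have h4K : (0:ℤ) ≤ 4*K*t^2 := by positivity
        have h1 : (2*(j:ℤ)+1)*t^2 ≤ (4*K - 1)*t^2 :=
          mul_le_mul_of_nonneg_right (by omega) (sq_nonneg t)
        have h2 : (0:ℤ) ≤ (2*(j:ℤ)+1)*t^2 := by positivity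
        have heb : |c + (2*(j:ℤ)+1)*t^2| ≤ S := by
          rw [hSdef, abs_le]
          constructor
          · linarith only [neg_abs_le c, h1, h2, h4K, sq_nonneg t]
          · linarith only [le_abs_self c, h1, h2, sq_nonneg t]
        have hA := abs_le.mp heb
        have hr1 : 0 ≤ h j + (c + (2*(j:ℤ)+1)*t^2) := by linarith only [hjS.1, hA.1]
        have hr2 : h j + (c + (2*(j:ℤ)+1)*t^2) < d := by linarith only [hjS.2, hA.2]
        rw [hstep j, Int.emod_eq_of_lt hr1 hr2, hIH]
        push_cast
        ring
    -- contradiction at K and 2K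
    have hKnat : ((K.toNat : ℤ)) = K := Int.toNat_of_nonneg (by omega)
    have l1 := lin K.toNat (by rw [hKnat]; omega)
    have l2 := lin (2*K.toNat) (by push_cast [hKnat]; omega)
    have l1' : h K.toNat - h 0 = c*K + t^2*K^2 := by
      rw [l1, hKnat]; ring
    have l2' : h (2*K.toNat) - h 0 = c*(2*K) + t^2*(2*K)^2 := by
      rw [l2]; push_cast [hKnat]; ring
    have q1 := hh0 K.toNat; have q2 := hhd K.toNat
    have q3 := hh0 (2*K.toNat); have q4 := hhd (2*K.toNat)
    have q5 := hh0 0; have q6 := hhd 0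
    have b11 : -d < c*K + t^2*K^2 := by linarith only [l1', q1, q2, q5, q6]
    have b12 : c*K + t^2*K^2 < d := by linarith only [l1', q1, q2, q5, q6]
    have b21 : -d < c*(2*K) + t^2*(2*K)^2 := by linarith only [l2', q3, q4, q5, q6]
    have b22 : c*(2*K) + t^2*(2*K)^2 < d := by linarith only [l2', q3, q4, q5, q6]
    have hKtsq : 36*u^2 ≤ (K*t)^2 := by
      have h1 : (6*u)^2 ≤ (K*t)^2 := pow_le_pow_left₀ (by positivity) hKt_ge 2
      linarith only [h1]
    have hu2b : d - 2*u ≤ u^2 := by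
      have h1 : (u+1)^2 = u^2 + 2*u + 1 := by ring
      omega
    have huD : 144*u ≤ d := by
      have h1 : 144*u ≤ u*u := mul_le_mul_of_nonneg_right (by omega) hu0
      have h2 : u*u = u^2 := by ring
      linarith only [h1, h2, hu1]
    linarith only [b11, b12, b21, b22, hKtsq, hu2b, huD]
  obtain ⟨j, hj2K, hjS⟩ := claim
  -- construct n, m
  set m := M + (j:ℤ)*t with hmdef
  have hjt0 : 0 ≤ (j:ℤ)*t := by positivity
  have hmM : M ≤ m := by omega
  have hm2a : a < m^2 := by
    have h1 : M^2 ≤ m^2 := pow_le_pow_left₀ (by omega) hmM 2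
    linarith only [h1, haM]
  set q := (m^2 - a) / d with hq
  have hdr : m^2 - a = d*q + h j := by
    have hje : h j = (m^2 - a) % d := rfl
    rw [hje]
    exact (Int.mul_ediv_add_emod _ _).symm
  have hq0 : 0 ≤ q := Int.ediv_nonneg (by omega) (by omega)
  have hjt : (j:ℤ)*t ≤ 14*u := by
    have h1 : (j:ℤ)*t ≤ (2*K)*t := mul_le_mul_of_nonneg_right hj2K ht0.le
    linarith only [h1, hKt_le]
  have hm14 : m ≤ M + 14*u := by omega
  have hN7 : (10:ℤ)^7 ≤ N := by
    by_contra hcon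
    push_neg at hcon
    have h2 : N^2 ≤ ((10:ℤ)^7)^2 := pow_le_pow_left₀ (by omega) (by omega) 2
    have hA : (0:ℤ) ≤ 1800*a := by positivity
    have h3 : (1800*a)^2 ≤ (N^2*d)^2 := pow_le_pow_left₀ hA hb 2
    have h5 : (N^2)^2 ≤ (((10:ℤ)^7)^2)^2 := pow_le_pow_left₀ (by positivity) h2 2
    have h5' : N^4*d^2 ≤ (10:ℤ)^28*d^2 := by
      have := mul_le_mul_of_nonneg_right h5 (sq_nonneg d)
      have e1 : (N^2)^2 = N^4 := by ring
      have e2 : (((10:ℤ)^7)^2)^2 = (10:ℤ)^28 := by norm_num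
      rw [e1, e2] at this
      exact this
    have h7 : (10:ℤ)^24 * d^2 < d^3 := by
      have := mul_lt_mul_of_pos_right hd (by positivity : (0:ℤ) < d^2)
      linarith only [this]
    have hd2 : (0:ℤ) < d^2 := by positivity
    linarith only [h3, h5', hbig, h7, hd2]
  -- key integer bound via reals
  have hkey : 30*M*u + 196*u^2 < N*d := by
    have hD1 : (1:ℝ) ≤ (d:ℝ) := by exact_mod_cast hd1
    have hD0 : (0:ℝ) < (d:ℝ) := by exact_mod_cast hd0
    set sq : ℝ := (d:ℝ)^((1:ℝ)/2) with hsq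
    have hsq0 : (0:ℝ) ≤ sq := Real.rpow_nonneg hD0.le _
    have hsq2 : sq^2 = (d:ℝ) := by
      rw [hsq, rpow_pow_eq _ hD0.le]
      norm_num
    have hNr : (0:ℝ) ≤ (N:ℝ) := by exact_mod_cast (by omega : (0:ℤ) ≤ N)
    have hs_le : 42*(s:ℝ) ≤ (N:ℝ) * sq := by
      apply le_of_pow_le_pow_left₀ (two_ne_zero) (by positivity)
      have hint : (1764 * s^2 : ℤ) ≤ N^2*d := by linarith only [hs1, hb, ha]
      have hr : (1764 * (s:ℝ)^2) ≤ (N:ℝ)^2*(d:ℝ) := by exact_mod_cast hint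
      calc (42*(s:ℝ))^2 = 1764 * (s:ℝ)^2 := by ring
        _ ≤ (N:ℝ)^2*(d:ℝ) := hr
        _ = ((N:ℝ)*sq)^2 := by rw [mul_pow, hsq2]
    have hu_le : (u:ℝ) ≤ sq := by
      apply le_of_pow_le_pow_left₀ (two_ne_zero) hsq0
      rw [hsq2]
      exact_mod_cast hu1
    have hNreal : (10:ℝ)^7 ≤ (N:ℝ) := by exact_mod_cast hN7
    have hsqd : sq ≤ (d:ℝ) := by linarith only [sq_nonneg (sq - 1), hsq2, hD1]
    have hMr : (M:ℝ) = (s:ℝ) + 1 := by rw [hMdef]; push_cast; ring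
    have hur : (0:ℝ) ≤ (u:ℝ) := by exact_mod_cast hu0
    have hsr : (0:ℝ) ≤ (s:ℝ) := by exact_mod_cast hs0
    have hNsq2 : (N:ℝ)*sq^2 = (N:ℝ)*(d:ℝ) := by rw [hsq2]
    have hfinal : 30*((s:ℝ)+1)*(u:ℝ) + 196*(u:ℝ)^2 < (N:ℝ)*(d:ℝ) := by
      have p1 : (42*(s:ℝ))*(u:ℝ) ≤ ((N:ℝ)*sq)*sq :=
        mul_le_mul hs_le hu_le hur (by positivity)
      have p2 : (u:ℝ)*(u:ℝ) ≤ sq*sq := mul_le_mul hu_le hu_le hur hsq0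
      have p3 : (10:ℝ)^7*(d:ℝ) ≤ (N:ℝ)*(d:ℝ) := mul_le_mul_of_nonneg_right hNreal hD0.le
      linarith only [p1, p2, p3, hNsq2, hsq2, hsqd, hu_le, hD1]
    have hcast : ((30*(s+1)*u + 196*u^2 : ℤ):ℝ) < ((N*d : ℤ):ℝ) := by
      push_cast
      linarith only [hfinal]
    have hZ : (30*(s+1)*u + 196*u^2 : ℤ) < N*d := by exact_mod_cast hcast
    calc 30*M*u + 196*u^2 = 30*(s+1)*u + 196*u^2 := by rw [hMdef]
      _ < N*d := hZ
  have hm2Nd : m^2 - a < N*d := by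
    have h1 : m^2 ≤ (M + 14*u)^2 := pow_le_pow_left₀ (by omega) hm14 2
    have h2 : (M + 14*u)^2 = M^2 + 28*M*u + 196*u^2 := by ring
    have h3 : 2*M*1 ≤ 2*M*u := mul_le_mul_of_nonneg_left (by omega) (by omega)
    linarith only [h1, h2, h3, hM2a, hkey, hMdef]
  have hqN : q < N := by
    have h1 : q*d < N*d := by linarith only [hdr, hh0 j, hm2Nd]
    exact lt_of_mul_lt_mul_right h1 hd0.le
  -- real bound on S
  have hD1 : (1:ℝ) ≤ (d:ℝ) := by exact_mod_cast hd1
  have hD0 : (0:ℝ) < (d:ℝ) := by exact_mod_cast hd0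
  have hSreal : (S:ℝ) ≤ 10^6 * (d:ℝ)^((3:ℝ)/4) := by
    set A : ℝ := (d:ℝ)^((1:ℝ)/4) with hA
    set B : ℝ := (d:ℝ)^((1:ℝ)/2) with hB
    set T : ℝ := (d:ℝ)^((3:ℝ)/4) with hT
    have hA0 : (0:ℝ) ≤ A := Real.rpow_nonneg hD0.le _
    have hB0 : (0:ℝ) ≤ B := Real.rpow_nonneg hD0.le _
    have hT0 : (0:ℝ) ≤ T := Real.rpow_nonneg hD0.le _
    have hA1 : (1:ℝ) ≤ A := by
      rw [hA]
      calc (1:ℝ) = (1:ℝ)^((1:ℝ)/4) := (Real.one_rpow _).symm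
        _ ≤ (d:ℝ)^((1:ℝ)/4) := Real.rpow_le_rpow (by norm_num) hD1 (by norm_num)
    have hA4 : A^(4:ℕ) = (d:ℝ) := by rw [hA, rpow_pow_eq _ hD0.le]; norm_num
    have hBA : B * A = T := by rw [hB, hA, hT, ← Real.rpow_add hD0]; norm_num
    have hTA : T * A = (d:ℝ) := by rw [hT, hA, ← Real.rpow_add hD0]; norm_num
    have hBT : B ≤ T := Real.rpow_le_rpow_of_exponent_le hD1 (by norm_num)
    have hVr : A ≤ (V:ℝ) := by
      apply pow4_le (by exact_mod_cast (by omega : (0:ℤ) ≤ V))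
      rw [hA4]
      exact_mod_cast hV4.le
    have hvr : (v:ℝ) ≤ A := by
      apply pow4_le hA0
      rw [hA4]
      exact_mod_cast hv4
    have hV2A : (V:ℝ) ≤ 2*A := by
      have hVv : (V:ℝ) = (v:ℝ) + 1 := by rw [hVdef]; push_cast; ring
      linarith only [hvr, hA1, hVv]
    have hur_le : (u:ℝ) ≤ B := by
      apply le_of_pow_le_pow_left₀ (two_ne_zero) hB0
      have hB2 : B^2 = (d:ℝ) := by rw [hB, rpow_pow_eq _ hD0.le]; norm_num
      rw [hB2]
      exact_mod_cast hu1
    have htr0 : (0:ℝ) < (t:ℝ) := by exact_mod_cast ht0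
    have htVr : (t:ℝ) ≤ (V:ℝ) := by exact_mod_cast htV
    have hcr : |(c:ℝ)| ≤ T := by
      have h1 : |(c:ℝ)| * (V:ℝ) ≤ (d:ℝ) := by
        have hcc : ((|c| * V : ℤ):ℝ) ≤ ((d:ℤ):ℝ) := by exact_mod_cast hcV.le
        push_cast at hcc
        linarith only [hcc]
      have hc0r : (0:ℝ) ≤ |(c:ℝ)| := abs_nonneg _
      have h2 : |(c:ℝ)| * A ≤ T * A := by
        calc |(c:ℝ)| * A ≤ |(c:ℝ)| * (V:ℝ) := mul_le_mul_of_nonneg_left hVr hc0r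
          _ ≤ (d:ℝ) := h1
          _ = T * A := hTA.symm
      exact le_of_mul_le_mul_right h2 (by linarith only [hA1])
    have hKtr : (K:ℝ)*(t:ℝ) ≤ 7*(u:ℝ) := by exact_mod_cast hKt_le
    have hKr0 : (0:ℝ) ≤ (K:ℝ) := by exact_mod_cast (by omega : (0:ℤ) ≤ K)
    have htA : (t:ℝ) ≤ 2*A := le_trans htVr hV2A
    have h4Kt : 4*(K:ℝ)*(t:ℝ)^2 ≤ 56 * T := by
      calc 4*(K:ℝ)*(t:ℝ)^2 = 4*((K:ℝ)*(t:ℝ))*(t:ℝ) := by ring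
        _ ≤ 4*(7*(u:ℝ))*(t:ℝ) := mul_le_mul_of_nonneg_right (by linarith only [hKtr]) htr0.le
        _ = 28*((u:ℝ)*(t:ℝ)) := by ring
        _ ≤ 28*(B*(2*A)) := by
            apply mul_le_mul_of_nonneg_left _ (by norm_num)
            exact mul_le_mul hur_le htA htr0.le hB0
        _ = 56 * (B*A) := by ring
        _ = 56 * T := by rw [hBA]
    have ht2 : (t:ℝ)^2 ≤ 4 * T := by
      have hsq : (t:ℝ)^2 ≤ (2*A)^2 := pow_le_pow_left₀ htr0.le htA 2
      have hA2B : A^2 = B := by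
        rw [hA, hB, rpow_pow_eq _ hD0.le]; norm_num
      linarith only [hsq, hA2B, hBT]
    have hSr : (S:ℝ) = |(c:ℝ)| + 4*(K:ℝ)*(t:ℝ)^2 + (t:ℝ)^2 := by
      rw [hSdef]; push_cast; ring
    rw [hSr]
    linarith only [hcr, h4Kt, ht2, hT0]
  -- final construction
  have final : ∀ e : ℤ, |e| ≤ S → |((e:ℤ):ℝ)| ≤ 10^6 * (d:ℝ)^((3:ℝ)/4) := by
    intro e he
    rw [← Int.cast_abs]
    exact le_trans (by exact_mod_cast he) hSreal
  rcases hjS with hle | hge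
  · refine ⟨q, m, hq0, by omega, ?_⟩
    have herr : a + q*d - m^2 = -(h j) := by linear_combination -hdr
    rw [herr]
    apply final
    rw [abs_neg, abs_of_nonneg (hh0 j)]
    exact hle
  · refine ⟨q+1, m, by omega, by omega, ?_⟩
    have herr : a + (q+1)*d - m^2 = d - h j := by linear_combination -hdr
    rw [herr]
    apply final
    rw [abs_of_nonneg (by linarith only [hhd j, hge] : (0:ℤ) ≤ d - h j)]
    omega


/-- For integers `a ≥ 0`, `d ≥ 1`, `N ≥ 1` with `a ≤ N^2*d/1800`,
some term of the arithmetic progression `a, a+d, ..., a+N*d` is within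
`C * d^(3/4)` of a perfect square. -/
theorem closest_square_to_AP_corollary :
    ∃ C : ℝ, 0 < C ∧ ∀ a d N : ℤ, 0 ≤ a → 1 ≤ d → 1 ≤ N →
      (a : ℝ) ≤ (N : ℝ) ^ 2 * d / 1800 →
      ∃ n m : ℤ, 0 ≤ n ∧ n ≤ N ∧
        |((a + n * d - m ^ 2 : ℤ) : ℝ)| ≤ C * (d : ℝ) ^ ((3 : ℝ) / 4) := by
  refine ⟨10^6, by norm_num, ?_⟩
  intro a d N ha hd hN hb
  have hbZ : 1800 * a ≤ N^2 * d := by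
    have h1 : (1800:ℝ) * (a:ℝ) ≤ (N:ℝ)^2 * (d:ℝ) := by linarith only [hb]
    exact_mod_cast h1
  have hD1 : (1:ℝ) ≤ (d:ℝ) := by exact_mod_cast hd
  have hD0 : (0:ℝ) < (d:ℝ) := by linarith only [hD1]
  have hT0 : (0:ℝ) ≤ (d:ℝ)^((3:ℝ)/4) := Real.rpow_nonneg hD0.le _
  by_cases hdsmall : d ≤ 10^24
  · obtain ⟨n, m, hn0, hnN, herr⟩ := lemA a d N ha hd hN hbZ
    refine ⟨n, m, hn0, hnN, ?_⟩
    have h1 : |((a + n*d - m^2 : ℤ):ℝ)| ≤ (d:ℝ) := by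
      rw [← Int.cast_abs]
      exact_mod_cast herr.le
    have hA4 : ((d:ℝ)^((1:ℝ)/4))^(4:ℕ) = (d:ℝ) := by
      rw [rpow_pow_eq _ hD0.le]; norm_num
    have h14 : (d:ℝ)^((1:ℝ)/4) ≤ 10^6 := by
      apply pow4_le (by norm_num)
      rw [hA4]
      calc (d:ℝ) ≤ ((10:ℝ)^24) := by exact_mod_cast hdsmall
        _ = ((10:ℝ)^6)^4 := by norm_num
    have hsplit : (d:ℝ) = (d:ℝ)^((1:ℝ)/4) * (d:ℝ)^((3:ℝ)/4) := by
      rw [← Real.rpow_add hD0]; norm_num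
    have hfin : ((10:ℝ)^6) * (d:ℝ)^((3:ℝ)/4) = (10^6 : ℝ) * (d:ℝ)^((3:ℝ)/4) := by norm_num
    calc |((a + n*d - m^2 : ℤ):ℝ)| ≤ (d:ℝ) := h1
      _ = (d:ℝ)^((1:ℝ)/4) * (d:ℝ)^((3:ℝ)/4) := hsplit
      _ ≤ 10^6 * (d:ℝ)^((3:ℝ)/4) := mul_le_mul_of_nonneg_right h14 hT0
  · by_cases hasmall : a^2 ≤ d^3
    · obtain ⟨s, hs0, hs1, hs2⟩ := int_sqrt_ex a ha
      refine ⟨0, s, le_refl 0, by omega, ?_⟩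
      have he : a + 0*d - s^2 = a - s^2 := by ring
      have he2 : (s+1)^2 = s^2 + 2*s + 1 := by ring
      have herrZ : |a + 0*d - s^2| ≤ 2*s := by
        rw [he, abs_of_nonneg (by linarith only [hs1] : (0:ℤ) ≤ a - s^2)]
        linarith only [hs2, he2]
      have hT4 : ((d:ℝ)^((3:ℝ)/4))^(4:ℕ) = (d:ℝ)^(3:ℕ) := by
        rw [rpow_pow_eq _ hD0.le]
        rw [show ((3:ℝ)/4 * (4:ℕ) : ℝ) = ((3:ℕ):ℝ) by norm_num, Real.rpow_natCast]
      have hs4 : s^4 ≤ d^3 := by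
        have h1 : (s^2)^2 ≤ a^2 := pow_le_pow_left₀ (by positivity) hs1 2
        have h2 : (s^2)^2 = s^4 := by ring
        omega
      have hsT : (s:ℝ) ≤ (d:ℝ)^((3:ℝ)/4) := by
        apply pow4_le hT0
        rw [hT4]
        exact_mod_cast hs4
      have h1 : |((a + 0*d - s^2 : ℤ):ℝ)| ≤ 2*(s:ℝ) := by
        rw [← Int.cast_abs]
        exact_mod_cast herrZ
      calc |((a + 0*d - s^2 : ℤ):ℝ)| ≤ 2*(s:ℝ) := h1
        _ ≤ 2 * ((d:ℝ)^((3:ℝ)/4)) := by linarith only [hsT]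
        _ ≤ 10^6 * (d:ℝ)^((3:ℝ)/4) := by
            apply mul_le_mul_of_nonneg_right _ hT0
            norm_num
    · exact mainCase a d N ha (by omega) hN hbZ (by omega)
end

section
/- Let f(x) = 1 − |x| for −1 ≤ x ≤ 1 and f(x) = 0 otherwise. For all integers h, A and d ≥ 1 and every real M > 0, one has Σ_{m ∈ ℤ} e(h·(A+m)²/d)·f(m/M) = (M/d)·Σ_{k ∈ ℤ} (sin(π·k·M/d)/(π·k·M/d))²·e(−k·A/d)·G(h, k; d), where the factor (sin(π·k·M/d)/(π·k·M/d))² is interpreted as 1 when k·M/d = 0, both sums converge absolutely, and G(a, b; q) := Σ_{n mod q} e((a·n² + b·n)/q) denotes the Gauss sum. -/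
/-!
Write `m = q d + r - A` with `0 ≤ r < d`. Since `e(h (q d + r)² / d) = e(h r² / d)`, the left side
becomes `Σ_r e(h r²/d) Σ_q f(((r - A)/d + q) / (M/d))`. Poisson summation for the compactly
supported triangle function, whose Fourier transform is `(sin πy / πy)²`, turns each inner sum
into `(M/d) Σ_k (sin(πkM/d)/(πkM/d))² e(k (r - A)/d)`, and summing over `r` first produces the
Gauss sums.
-/

open scoped Real

/-- `e(u) = e^{2πiu}`. -/
noncomputable def eu (u : ℝ) : ℂ := Complex.exp (2 * Real.pi * Complex.I * u)

/-- The Gauss sum `G(a, b; q) = Σ_{n mod q} e((a n² + b n)/q)`. -/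
noncomputable def gaussSum' (a b : ℤ) (q : ℕ) : ℂ :=
  ∑ n ∈ Finset.range q, eu (((a * n ^ 2 + b * n : ℤ) : ℝ) / q)

/-- The triangle function: `1 - |x|` on `[-1, 1]`, and `0` elsewhere. -/
noncomputable def triangle (x : ℝ) : ℝ := if |x| ≤ 1 then 1 - |x| else 0

/-- `(sin(πx)/(πx))²`, interpreted as `1` at `x = 0`. -/
noncomputable def sincSq (x : ℝ) : ℝ :=
  if x = 0 then 1 else (Real.sin (Real.pi * x) / (Real.pi * x)) ^ 2

open Complex FourierTransform

lemma eu_add (a b : ℝ) : eu (a + b) = eu a * eu b := by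
  simp [eu, mul_add, exp_add]

lemma eu_intCast (z : ℤ) : eu z = 1 := by
  rw [eu, ← exp_int_mul_two_pi_mul_I z]
  push_cast
  ring_nf

lemma eu_add_intCast (a : ℝ) (z : ℤ) : eu (a + z) = eu a := by
  rw [eu_add, eu_intCast, mul_one]

lemma norm_eu (u : ℝ) : ‖eu u‖ = 1 := by
  rw [eu, show 2 * π * I * u = ((2 * π * u : ℝ) : ℂ) * I by push_cast; ring]
  exact norm_exp_ofReal_mul_I _

lemma fourier_coe_eq_eu (n : ℤ) (x : ℝ) : fourier n (x : UnitAddCircle) = eu (n * x) := by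
  rw [fourier_coe_apply, eu]
  push_cast
  ring_nf

lemma eu_intCast_mul_sq_div_add_mul (a q r : ℤ) {d : ℕ} (hd : d ≠ 0) :
    eu (((a * (q * d + r) ^ 2 : ℤ) : ℝ) / d) = eu (((a * r ^ 2 : ℤ) : ℝ) / d) := by
  rw [← eu_add_intCast (((a * r ^ 2 : ℤ) : ℝ) / d) (a * (2 * q * r + q ^ 2 * d))]
  congr 1
  push_cast
  field_simp
  ring

lemma norm_gaussSum'_le (a b : ℤ) (q : ℕ) : ‖gaussSum' a b q‖ ≤ q :=
  (norm_sum_le _ _).trans (by simp [norm_eu])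

lemma eu_mul_gaussSum' (a b A : ℤ) (q : ℕ) :
    eu (-(b * A) / q) * gaussSum' a b q =
      ∑ n ∈ Finset.range q, eu (a * n ^ 2 / q) * eu (b * ((n - A) / q)) := by
  rw [gaussSum', Finset.mul_sum]
  refine Finset.sum_congr rfl fun n _ => ?_
  rw [← eu_add, ← eu_add]
  congr 1
  push_cast
  ring

lemma Int.tsum_eq_sum_range_tsum {R : Type*} [AddCommGroup R] [UniformSpace R]
    [IsUniformAddGroup R] [CompleteSpace R] [T0Space R] {f : ℤ → R} (hf : Summable f) (N : ℕ)
    [NeZero N] : ∑' m, f m = ∑ r ∈ Finset.range N, ∑' q : ℤ, f (q * N + r) := by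
  let e : ℤ ≃ Fin N × ℤ := (Int.divModEquiv N).trans (Equiv.prodComm _ _)
  have he : Summable fun p => f (e.symm p) := hf.comp_injective e.symm.injective
  rw [← e.symm.tsum_eq f, he.tsum_prod, tsum_fintype,
    ← Fin.sum_univ_eq_sum_range (fun r => ∑' q : ℤ, f (q * N + r))]
  rfl

lemma triangle_eq_zero_of_one_le_abs {x : ℝ} (hx : 1 ≤ |x|) : triangle x = 0 := by
  rw [triangle]; split_ifs with h <;> linarith

lemma triangle_of_mem_Icc {x : ℝ} (hx : x ∈ Set.Icc (0 : ℝ) 1) : triangle x = 1 - x := by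
  rw [triangle, abs_of_nonneg hx.1, if_pos hx.2]

lemma triangle_neg (x : ℝ) : triangle (-x) = triangle x := by
  rw [triangle, triangle, abs_neg]

lemma continuous_triangle : Continuous triangle := by
  have : triangle = fun x => max (1 - |x|) 0 := by
    funext x
    rw [triangle]
    split_ifs with h
    · rw [max_eq_left (by linarith)]
    · rw [max_eq_right (by linarith)]
  rw [this]
  fun_prop

lemma hasCompactSupport_triangle : HasCompactSupport triangle :=
  HasCompactSupport.intro (isCompact_Icc (a := -1) (b := 1)) fun x hx =>
    triangle_eq_zero_of_one_le_abs <| by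
      rw [Set.mem_Icc, not_and_or, not_le, not_le] at hx
      rcases hx with hx | hx <;> [rw [abs_of_neg (by linarith)]; rw [abs_of_pos (by linarith)]] <;>
        linarith

lemma summable_mul_triangle_intCast_div (g : ℤ → ℂ) {M : ℝ} (hM : M ≠ 0) :
    Summable fun m : ℤ => g m * triangle (m / M) := by
  refine summable_of_hasFiniteSupport <| (Set.finite_Icc (-⌈|M|⌉) ⌈|M|⌉).subset fun m hm => ?_
  have hlt : |(m : ℝ) / M| < 1 := by
    by_contra! h
    exact hm (by simp [triangle_eq_zero_of_one_le_abs h])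
  rw [abs_div, div_lt_one (abs_pos.2 hM), ← Int.cast_abs] at hlt
  have : |m| ≤ ⌈|M|⌉ := by exact_mod_cast hlt.le.trans (Int.le_ceil _)
  exact Set.mem_Icc.2 (abs_le.1 this)

lemma sincSq_nonneg (x : ℝ) : 0 ≤ sincSq x := by
  rw [sincSq]; split <;> positivity

lemma sincSq_le_inv_sq {x : ℝ} (hx : x ≠ 0) : sincSq x ≤ 1 / (π * x) ^ 2 := by
  rw [sincSq, if_neg hx, div_pow]
  gcongr
  exact Real.sin_sq_le_one _

lemma summable_sincSq_mul {L : ℝ} (hL : L ≠ 0) : Summable fun k : ℤ => sincSq (k * L) := by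
  refine Summable.of_norm_bounded_eventually
    ((Real.summable_one_div_int_pow.2 one_lt_two).mul_left (1 / (π * L) ^ 2)) ?_
  filter_upwards [(Set.finite_singleton (0 : ℤ)).eventually_cofinite_notMem] with k hk
  have hk0 : (k : ℝ) ≠ 0 := Int.cast_ne_zero.2 hk
  rw [Real.norm_of_nonneg (sincSq_nonneg _)]
  calc sincSq (k * L) ≤ 1 / (π * (k * L)) ^ 2 := sincSq_le_inv_sq (mul_ne_zero hk0 hL)
    _ = 1 / (π * L) ^ 2 * (1 / (k : ℝ) ^ 2) := by field_simp

lemma summable_norm_sincSq_mul {L : ℝ} (hL : L ≠ 0) {c : ℤ → ℂ} {C : ℝ} (hc : ∀ k, ‖c k‖ ≤ C) :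
    Summable fun k : ℤ => ‖(sincSq (k * L) : ℂ) * c k‖ := by
  refine Summable.of_nonneg_of_le (fun _ => norm_nonneg _) (fun k => ?_)
    ((summable_sincSq_mul hL).mul_right C)
  rw [norm_mul, norm_real, Real.norm_of_nonneg (sincSq_nonneg _)]
  exact mul_le_mul_of_nonneg_left (hc k) (sincSq_nonneg _)

lemma integral_mul_triangle {g : ℝ → ℂ} (hg : Continuous g) :
    ∫ x, g x * triangle x = ∫ x in (0 : ℝ)..1, (g x + g (-x)) * (1 - x) := by
  have hcont : Continuous fun x => g x * triangle x := by
    have := continuous_triangle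
    fun_prop
  have hcont_neg : Continuous fun x => g (-x) * triangle (-x) := hcont.comp continuous_neg
  have hsupp : ∀ x ∉ Set.Ioc (-1 : ℝ) 1, g x * triangle x = 0 := by
    intro x hx
    rw [triangle_eq_zero_of_one_le_abs, ofReal_zero, mul_zero]
    rw [Set.mem_Ioc, not_and_or, not_lt, not_le] at hx
    rcases hx with hx | hx <;> [rw [abs_of_neg (by linarith)]; rw [abs_of_pos (by linarith)]] <;>
      linarith
  rw [← MeasureTheory.setIntegral_eq_integral_of_forall_compl_eq_zero hsupp,
    ← intervalIntegral.integral_of_le (by norm_num),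
    ← intervalIntegral.integral_add_adjacent_intervals (b := 0) (hcont.intervalIntegrable _ _)
      (hcont.intervalIntegrable _ _),
    ← neg_zero, ← intervalIntegral.integral_comp_neg, neg_zero, add_comm,
    ← intervalIntegral.integral_add (hcont.intervalIntegrable _ _)
      (hcont_neg.intervalIntegrable _ _)]
  refine intervalIntegral.integral_congr fun x hx => ?_
  rw [Set.uIcc_of_le zero_le_one] at hx
  simp only [triangle_neg, triangle_of_mem_Icc hx]
  push_cast
  ring

lemma integral_exp_mul_one_sub {c : ℂ} (hc : c ≠ 0) :
    ∫ x in (0 : ℝ)..1, exp (c * x) * (1 - x) = (exp c - c - 1) / c ^ 2 := by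
  have hderiv : ∀ x ∈ Set.uIcc (0 : ℝ) 1, HasDerivAt
      (fun x : ℝ => exp (c * x) * (c + 1 - c * x) / c ^ 2) (exp (c * x) * (1 - x)) x := by
    intro x _
    have hlin : HasDerivAt (fun x : ℝ => c * (x : ℂ)) c x := by
      simpa using (hasDerivAt_id (x : ℂ)).comp_ofReal.const_mul c
    refine ((hlin.cexp.fun_mul (hlin.const_sub (c + 1))).div_const (c ^ 2)).congr_deriv ?_
    field_simp
    ring
  rw [intervalIntegral.integral_eq_sub_of_hasDerivAt hderiv (by
    apply Continuous.intervalIntegrable; fun_prop)]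
  simp only [ofReal_one, ofReal_zero, mul_one, mul_zero, exp_zero]
  ring

lemma exp_add_exp_neg_sub_two_div_sq (s : ℂ) :
    (exp (2 * s * I) + exp (-(2 * s * I)) - 2) / (2 * s * I) ^ 2 = (sin s / s) ^ 2 := by
  have hsin : exp (s * I) - exp (-(s * I)) = 2 * I * sin s := by
    rw [← neg_mul, exp_mul_I, exp_mul_I, cos_neg, sin_neg]
    ring
  have hsq : exp (2 * s * I) + exp (-(2 * s * I)) - 2 = (exp (s * I) - exp (-(s * I))) ^ 2 := by
    rw [sub_sq, mul_assoc (2 : ℂ) (exp _), ← exp_add, add_neg_cancel, exp_zero, ← exp_nat_mul,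
      ← exp_nat_mul]
    push_cast
    ring_nf
  rw [hsq, hsin, mul_pow, mul_pow, mul_pow, mul_pow, I_sq, div_pow, mul_right_comm _ (s ^ 2),
    mul_div_mul_left _ _ (by norm_num : (2 : ℂ) ^ 2 * -1 ≠ 0)]

lemma fourier_triangle (y : ℝ) : 𝓕 (fun x : ℝ => (triangle x : ℂ)) y = sincSq y := by
  set s : ℂ := -(π * y)
  have hexp : ∀ x : ℝ, exp (↑(-2 * π * x * y) * I) = exp (2 * s * I * x) := fun x => by
    congr 1
    simp only [s]
    push_cast
    ring
  simp_rw [Real.fourier_real_eq_integral_exp_smul, smul_eq_mul, hexp]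
  rw [integral_mul_triangle (by fun_prop)]
  by_cases hy : y = 0
  · simp only [s, hy, sincSq, if_pos, ofReal_zero, mul_zero, neg_zero, zero_mul, exp_zero]
    rw [intervalIntegral.integral_const_mul, intervalIntegral.integral_sub intervalIntegrable_const
      (continuous_ofReal.intervalIntegrable 0 1), intervalIntegral.integral_ofReal (f := fun x => x)]
    simp
    norm_num
  set c : ℂ := 2 * s * I
  have hc : c ≠ 0 := by simp [c, s, hy, Real.pi_ne_zero]
  simp_rw [add_mul, ofReal_neg, mul_neg, ← neg_mul]
  rw [intervalIntegral.integral_add (by apply Continuous.intervalIntegrable; fun_prop)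
      (by apply Continuous.intervalIntegrable; fun_prop),
    integral_exp_mul_one_sub hc, integral_exp_mul_one_sub (neg_ne_zero.2 hc), neg_sq, ← add_div,
    show exp c - c - 1 + (exp (-c) - -c - 1) = exp c + exp (-c) - 2 by ring,
    exp_add_exp_neg_sub_two_div_sq, sincSq, if_neg hy]
  simp only [s]
  push_cast
  rw [sin_neg, neg_div_neg_eq]

lemma Real.fourier_comp_div {E : Type*} [NormedAddCommGroup E] [NormedSpace ℂ E] (f : ℝ → E)
    {L : ℝ} (hL : L ≠ 0) (w : ℝ) : 𝓕 (fun x => f (x / L)) w = |L| • 𝓕 f (w * L) := by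
  simp only [Real.fourier_real_eq]
  rw [← MeasureTheory.Measure.integral_comp_div _ L]
  congr 2 with x
  rw [mul_comm w, ← mul_assoc, div_mul_cancel₀ x hL]

theorem Real.tsum_eq_tsum_fourier_of_hasCompactSupport {f : ℝ → ℂ} (hc : Continuous f)
    (hf : HasCompactSupport f) (hFf : Summable fun n : ℤ => 𝓕 f n) (x : ℝ) :
    ∑' n : ℤ, f (x + n) = ∑' n : ℤ, 𝓕 f n * fourier n (x : UnitAddCircle) := by
  have hzero : f =ᶠ[Filter.cocompact ℝ] 0 := by
    simpa [Filter.coclosedCompact_eq_cocompact] using hasCompactSupport_iff_eventuallyEq.1 hf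
  exact Real.tsum_eq_tsum_fourier_of_rpow_decay_of_summable hc one_lt_two
    (hzero.trans_isBigO (Asymptotics.isBigO_zero _ _)) hFf x

lemma tsum_triangle_div_eq_tsum_sincSq {L : ℝ} (hL : 0 < L) (c : ℝ) :
    ∑' j : ℤ, (triangle ((c + j) / L) : ℂ) = ∑' k : ℤ, L * (sincSq (k * L) * eu (k * c)) := by
  have hF : ∀ w, 𝓕 (fun x => (triangle (x / L) : ℂ)) w = L * sincSq (w * L) := fun w => by
    rw [Real.fourier_comp_div (fun x => (triangle x : ℂ)) hL.ne', fourier_triangle,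
      abs_of_pos hL, real_smul]
  have hsupp : HasCompactSupport fun x => (triangle (x / L) : ℂ) := by
    simpa [Function.comp_def, div_eq_inv_mul] using
      (hasCompactSupport_triangle.comp_smul (inv_ne_zero hL.ne')).comp_left ofReal_zero
  rw [Real.tsum_eq_tsum_fourier_of_hasCompactSupport (by have := continuous_triangle; fun_prop)
    hsupp]
  · simp_rw [hF, fourier_coe_eq_eu, mul_assoc]
  · simp_rw [hF]
    exact (summable_ofReal.2 (summable_sincSq_mul hL.ne')).mul_left _

/-- Poisson-summation identity:
`Σ_{m ∈ ℤ} e(h(A+m)²/d) f(m/M) = (M/d) Σ_{k ∈ ℤ} (sin(πkM/d)/(πkM/d))² e(-kA/d) G(h,k;d)`,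
both sums converging absolutely, where `f` is the triangle function. -/
theorem poisson_summation_gauss (h A : ℤ) (d : ℕ) (hd : 1 ≤ d) (M : ℝ) (hM : 0 < M) :
    Summable (fun m : ℤ =>
      ‖eu (((h * (A + m) ^ 2 : ℤ) : ℝ) / d) * (triangle ((m : ℝ) / M) : ℂ)‖) ∧
    Summable (fun k : ℤ =>
      ‖(sincSq ((k : ℝ) * M / d) : ℂ) * eu (-((k : ℝ) * A) / d) * gaussSum' h k d‖) ∧
    ∑' m : ℤ, eu (((h * (A + m) ^ 2 : ℤ) : ℝ) / d) * (triangle ((m : ℝ) / M) : ℂ) =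
      ((M : ℂ) / d) *
        ∑' k : ℤ, (sincSq ((k : ℝ) * M / d) : ℂ) * eu (-((k : ℝ) * A) / d) *
          gaussSum' h k d := by
  have hd_ne : NeZero d := ⟨by omega⟩
  have hL : 0 < M / d := div_pos hM (by exact_mod_cast hd)
  set F : ℤ → ℂ := fun m => eu (((h * (A + m) ^ 2 : ℤ) : ℝ) / d) * (triangle ((m : ℝ) / M) : ℂ)
  have hF : Summable F := summable_mul_triangle_intCast_div _ hM.ne'
  have hF_residue : ∀ (q : ℤ) (r : ℕ),
      F (q * d + r - A) = eu (h * r ^ 2 / d) * triangle (((r - A) / d + q) / (M / d)) := by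
    intro q r
    simp only [F, add_sub_cancel, eu_intCast_mul_sq_div_add_mul _ _ _ hd_ne.ne]
    push_cast
    congr 3
    field_simp
    ring
  have hR : Summable fun k : ℤ =>
      ‖(sincSq (k * (M / d)) : ℂ) * (eu (-(k * A) / d) * gaussSum' h k d)‖ :=
    summable_norm_sincSq_mul hL.ne' fun k => by
      simpa [norm_eu] using norm_gaussSum'_le h k d
  refine ⟨hF.norm, by simpa only [mul_div_assoc, mul_assoc] using hR, ?_⟩
  calc ∑' m, F m = ∑' m, F (m - A) := ((Equiv.subRight A).tsum_eq F).symm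
    _ = (M / d : ℂ) * ∑ r ∈ Finset.range d, eu (h * r ^ 2 / d) *
          ∑' k : ℤ, (sincSq (k * (M / d)) : ℂ) * eu (k * ((r - A) / d)) := by
      have hF_shift : Summable fun m => F (m - A) := (Equiv.subRight A).summable_iff.2 hF
      rw [Int.tsum_eq_sum_range_tsum hF_shift d, Finset.mul_sum]
      refine Finset.sum_congr rfl fun r _ => ?_
      simp_rw [hF_residue, tsum_mul_left, tsum_triangle_div_eq_tsum_sincSq hL, tsum_mul_left]
      push_cast
      ring
    _ = (M / d : ℂ) * ∑' k : ℤ, ∑ r ∈ Finset.range d,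
          eu (h * r ^ 2 / d) * ((sincSq (k * (M / d)) : ℂ) * eu (k * ((r - A) / d))) := by
      rw [Summable.tsum_finsetSum fun r _ =>
        ((summable_norm_sincSq_mul hL.ne' fun k => (norm_eu _).le).of_norm).mul_left _]
      simp_rw [tsum_mul_left]
    _ = _ := by
      congr 1
      refine tsum_congr fun k => ?_
      rw [mul_assoc, eu_mul_gaussSum', Finset.mul_sum, mul_div_assoc]
      refine Finset.sum_congr rfl fun r _ => ?_
      ring
end
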